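/- arXiv:1003.0629 — 7 statements merged into one kernel-verified Lean document; each statement's English description precedes it below -/
import Mathlib

section
/- Let V be a vector space over a field of characteristic zero of dimension p with basis e_0, ..., e_{p-1}, and let q be a positive integer coprime to p. Then the p vectors s_l = e_{lq mod p} + e_{(lq+1) mod p} + ... + e_{(lq+q-1) mod p}, for l = 0, 1, ..., p-1 (all indices taken modulo p), span the whole space V. -/
/-!
`s_l` is the window `windowSum e (l q) q`. Windows of length `q` concatenate, so every
`windowSum e (l q) (q k)` lies in the span `S`; since `q` is a unit mod `p`, the `s_l` add up to
`q • ∑ e`, so `∑ e ∈ S` in characteristic zero. Choosing `k` with `q k = 1 + p j` and `l` with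
`l q = r` in `ZMod p`, the window `windowSum e r (q k)` is `e r` followed by `j` full turns, so
`e r ∈ S`.
-/

open Finset

theorem Nat.Coprime.exists_mul_eq_one_add_mul {p q : ℕ} (hpq : p.Coprime q) (hq : 0 < q) :
    ∃ k j : ℕ, q * k = 1 + p * j := by
  obtain hp | hp : p ≤ 1 ∨ 1 < p := by omega
  · refine ⟨1, q - 1, ?_⟩
    interval_cases p
    · simp_all
    · omega
  · obtain ⟨k, -, hk⟩ := Nat.exists_mul_mod_eq_one_of_coprime hpq.symm hp
    exact ⟨k, q * k / p, by rw [← hk, Nat.mod_add_div]⟩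

theorem ZMod.natCast_finVal_bijective (p : ℕ) [NeZero p] :
    Function.Bijective (fun i : Fin p => ((i : ℕ) : ZMod p)) :=
  (Fintype.bijective_iff_surjective_and_card _).mpr
    ⟨fun r => ⟨⟨r.val, r.val_lt⟩, ZMod.natCast_zmod_val r⟩, by simp⟩

section windowSum

variable {M : Type*} [AddCommGroup M] {p : ℕ} (f : ZMod p → M)

def windowSum (a : ZMod p) (n : ℕ) : M :=
  ∑ i ∈ range n, f (a + i)

@[simp]
theorem windowSum_one (a : ZMod p) : windowSum f a 1 = f a := by
  simp [windowSum]

theorem windowSum_add (a : ZMod p) (m n : ℕ) :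
    windowSum f a (m + n) = windowSum f a m + windowSum f (a + m) n := by
  simp only [windowSum, sum_range_add, Nat.cast_add, add_assoc]

variable [NeZero p]

theorem windowSum_self (a : ZMod p) : windowSum f a p = ∑ r, f r := by
  rw [windowSum, ← Fin.sum_univ_eq_sum_range (fun i => f (a + i))]
  exact Fintype.sum_bijective _
    ((Equiv.addLeft a).bijective.comp (ZMod.natCast_finVal_bijective p)) _ _ fun _ => rfl

theorem windowSum_mul_self (a : ZMod p) (j : ℕ) : windowSum f a (p * j) = j • ∑ r, f r := by
  induction j with
  | zero => simp [windowSum]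
  | succ j ih => rw [Nat.mul_succ, windowSum_add, ih, windowSum_self, succ_nsmul]

theorem sum_windowSum_mul_unit (u : (ZMod p)ˣ) (n : ℕ) :
    ∑ l, windowSum f (l * u) n = n • ∑ r, f r := by
  simp only [windowSum]
  rw [sum_comm]
  have hturn (i : ℕ) : ∑ l, f (l * u + i) = ∑ r, f r :=
    ((Units.mulRight u).trans (Equiv.addRight (i : ZMod p))).sum_comp f
  simp [hturn]

theorem apply_mem_of_windowSum_mem {S : AddSubgroup M} {q : ℕ} (hq : 0 < q)
    (hpq : p.Coprime q) (hfull : ∑ r, f r ∈ S) (hs : ∀ l : ZMod p, windowSum f (l * q) q ∈ S)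
    (r : ZMod p) : f r ∈ S := by
  have hconcat (l : ZMod p) (k : ℕ) : windowSum f (l * q) (q * k) ∈ S := by
    induction k generalizing l with
    | zero => simp [windowSum]
    | succ k ih =>
      rw [Nat.mul_succ, windowSum_add]
      refine S.add_mem (ih l) ?_
      simpa [add_mul, mul_comm (k : ZMod p)] using hs (l + k)
  obtain ⟨k, j, hkj⟩ := hpq.exists_mul_eq_one_add_mul hq
  have hr : (r * k : ZMod p) * q = r := by
    rw [mul_assoc, mul_comm (k : ZMod p), ← Nat.cast_mul, hkj]
    simp
  have hwindow := hconcat (r * k) k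
  rw [hr, hkj, windowSum_add, windowSum_one, windowSum_mul_self] at hwindow
  simpa using S.sub_mem hwindow (S.nsmul_mem hfull j)

end windowSum

/-- If `V` is a vector space over a field of characteristic zero with basis
`e : ZMod p → V` and `q` is a positive integer coprime to `p`, then the `p` vectors
`s_l = e (l*q) + e (l*q+1) + ⋯ + e (l*q+q-1)` (indices mod `p`) span `V`. -/
theorem stmt_0 {K V : Type*} [Field K] [CharZero K] [AddCommGroup V] [Module K V]
    (p q : ℕ) (hp : 0 < p) (hq : 0 < q) (hpq : Nat.Coprime p q)
    (e : Module.Basis (ZMod p) K V) :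
    Submodule.span K
      (Set.range (fun l : Fin p =>
        ∑ i ∈ Finset.range q, e ((((l : ℕ) * q + i : ℕ) : ZMod p)))) = ⊤ := by
  have : NeZero p := ⟨hp.ne'⟩
  set S := Submodule.span K
    (Set.range (fun l : Fin p => ∑ i ∈ Finset.range q, e ((((l : ℕ) * q + i : ℕ) : ZMod p))))
  have hs (l : ZMod p) : windowSum e (l * q) q ∈ S := by
    refine Submodule.subset_span ⟨⟨l.val, l.val_lt⟩, ?_⟩
    simp [windowSum]
  have hfull : ∑ r, e r ∈ S := by
    let u := ZMod.unitOfCoprime q hpq.symm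
    have hsum : (q : K) • ∑ r, e r = ∑ l, windowSum e (l * u) q := by
      rw [sum_windowSum_mul_unit, Nat.cast_smul_eq_nsmul]
    have hq' : (q : K) ≠ 0 := Nat.cast_ne_zero.mpr hq.ne'
    rw [← (S.smul_mem_iff hq'), hsum]
    exact S.sum_mem fun l _ => hs l
  rw [eq_top_iff, ← e.span_eq, Submodule.span_le]
  rintro _ ⟨r, rfl⟩
  exact apply_mem_of_windowSum_mem e (S := S.toAddSubgroup) hq hpq hfull hs r
end

section
/- Let G be a group acting linearly on a finite-dimensional vector space S, and let y ∈ S be nonzero. Among all subspaces V of S that contain y and have finite G-orbit in the set of subspaces, there exists a unique one of minimal dimension, and it equals the intersection of all subspaces containing y with finite G-orbit. -/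
/-!
The subspaces containing `y` with finite orbit form a family closed under finite intersections
(the orbit of `V ⊓ W` lies in the pairwise intersections of the orbits of `V` and `W`) and
containing `S`. Since the lattice of subspaces of a finite-dimensional space satisfies the
descending chain condition, such a family contains its own infimum, which is then the smallest
member and in particular the unique one of minimal dimension.
-/

section OrbitOfSubmodule

variable {R M ι : Type*} [Semiring R] [AddCommMonoid M] [Module R M]

theorem Submodule.finite_range_map_top (e : ι → M ≃ₗ[R] M) :
    (Set.range fun i => (⊤ : Submodule R M).map (e i).toLinearMap).Finite := by
  refine (Set.finite_singleton ⊤).subset ?_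
  rintro _ ⟨i, rfl⟩
  simp [Submodule.map_top, LinearEquiv.range]

theorem Submodule.finite_range_map_inf (e : ι → M ≃ₗ[R] M) {V W : Submodule R M}
    (hV : (Set.range fun i => V.map (e i).toLinearMap).Finite)
    (hW : (Set.range fun i => W.map (e i).toLinearMap).Finite) :
    (Set.range fun i => (V ⊓ W).map (e i).toLinearMap).Finite := by
  refine (hV.image2 (· ⊓ ·) hW).subset ?_
  rintro _ ⟨i, rfl⟩
  exact ⟨_, ⟨i, rfl⟩, _, ⟨i, rfl⟩, (Submodule.map_inf _ (e i).injective).symm⟩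

end OrbitOfSubmodule

theorem InfClosed.sInf_mem_of_wellFoundedLT {α : Type*} [CompleteLattice α] [WellFoundedLT α]
    {s : Set α} (hne : s.Nonempty) (hs : InfClosed s) : sInf s ∈ s :=
  CompleteLattice.WellFoundedGT.isSupClosedCompact αᵒᵈ inferInstance s hne hs.dual

theorem stmt_6_general {K S G : Type*} [Field K] [AddCommGroup S] [Module K S]
    [FiniteDimensional K S] [Group G] (ρ : G →* (S ≃ₗ[K] S)) (y : S) :
    ∃! V : Submodule K S,
      y ∈ V ∧ (Set.range fun g : G => V.map (ρ g).toLinearMap).Finite ∧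
      (∀ W : Submodule K S, y ∈ W →
          (Set.range fun g : G => W.map (ρ g).toLinearMap).Finite →
          Module.finrank K V ≤ Module.finrank K W) ∧
      V = sInf {W : Submodule K S |
          y ∈ W ∧ (Set.range fun g : G => W.map (ρ g).toLinearMap).Finite} := by
  set admissible : Set (Submodule K S) :=
    {W | y ∈ W ∧ (Set.range fun g : G => W.map (ρ g).toLinearMap).Finite}
  have top_mem : ⊤ ∈ admissible := ⟨Submodule.mem_top, Submodule.finite_range_map_top _⟩
  have admissible_infClosed : InfClosed admissible :=
    fun V hV W hW => ⟨⟨hV.1, hW.1⟩, Submodule.finite_range_map_inf _ hV.2 hW.2⟩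
  have hInf : sInf admissible ∈ admissible :=
    admissible_infClosed.sInf_mem_of_wellFoundedLT ⟨⊤, top_mem⟩
  refine ⟨sInf admissible, ⟨hInf.1, hInf.2, fun W hyW hW => ?_, rfl⟩, fun V hV => hV.2.2.2⟩
  exact Submodule.finrank_mono (sInf_le ⟨hyW, hW⟩)

/-- If `G` acts linearly on a finite-dimensional vector space `S` and `y ≠ 0`,
then among the subspaces containing `y` with finite `G`-orbit there is a unique one of
minimal dimension, and it equals the intersection of all of them. -/
theorem stmt_6 {K S G : Type*} [Field K] [AddCommGroup S] [Module K S]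
    [FiniteDimensional K S] [Group G] (ρ : G →* (S ≃ₗ[K] S)) (y : S) (hy : y ≠ 0) :
    ∃! V : Submodule K S,
      y ∈ V ∧ (Set.range fun g : G => V.map (ρ g).toLinearMap).Finite ∧
      (∀ W : Submodule K S, y ∈ W →
          (Set.range fun g : G => W.map (ρ g).toLinearMap).Finite →
          Module.finrank K V ≤ Module.finrank K W) ∧
      V = sInf {W : Submodule K S |
          y ∈ W ∧ (Set.range fun g : G => W.map (ρ g).toLinearMap).Finite} :=
  stmt_6_general ρ y
end

section
/- With V and M as in the Lotka-Volterra monodromy model (basis γ, Δ₁, Δ₂, δⱼ, Pⱼ with relation P₀+⋯+P_{p-1} = Δ₁-Δ₂+δ₀, and M acting as the monodromy around zero), the two-dimensional subspace H = span(γ, Δ₁ - Δ₂ + δ₀) satisfies Mᵖ(H) = H, and consequently the orbit {Mᵏ(H) : k ∈ ℤ} has at most p elements. -/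
/-- Symbols generating the homology model for `F = (xy)^p (x+y-1)`:
`γ, Δ₁, Δ₂, δ₀,…,δ_{p-1}, P₀,…,P_{p-1}`. -/
inductive LVSym (p : ℕ) : Type
  | gam : LVSym p
  | D1 : LVSym p
  | D2 : LVSym p
  | del : ZMod p → LVSym p
  | P : ZMod p → LVSym p
  deriving DecidableEq

/-- Basis vector of the free ℚ-vector space on the symbols. -/
noncomputable def LVe {p : ℕ} (s : LVSym p) : LVSym p →₀ ℚ := Finsupp.single s 1

/-- The single relation `P₀ + ⋯ + P_{p-1} - Δ₁ + Δ₂ - δ₀`. -/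
noncomputable def LVrel (p : ℕ) : LVSym p →₀ ℚ :=
  (∑ j ∈ Finset.range p, LVe (LVSym.P (j : ZMod p))) - LVe LVSym.D1 + LVe LVSym.D2
    - LVe (LVSym.del 0)

/-- The quotient space `V` of dimension `2p+2`. -/
abbrev LV (p : ℕ) : Type := (LVSym p →₀ ℚ) ⧸ Submodule.span ℚ {LVrel p}

/-- Class of a vector in the quotient. -/
noncomputable def LVcl {p : ℕ} (v : LVSym p →₀ ℚ) : LV p := Submodule.Quotient.mk v

/-!
Write `w = Δ₁ - Δ₂ + δ₀`. Since `M` fixes `Δ₁, Δ₂` and rotates the `δⱼ`, `Mᵖ w = w`. Since `M`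
shifts `P₀ → P₁ → ⋯ → P_{p-1}`, we get `Mᵏ γ = γ + P₀ + ⋯ + P_{k-1}` for `k ≤ p`, so by the
defining relation `Mᵖ γ = γ + w`. Thus `Mᵖ` acts on `H` by a shear and preserves it, and
`k ↦ Mᵏ(H)` is `p`-periodic on `ℤ`.
-/

theorem Function.Periodic.ncard_range_le {α : Type*} {f : ℤ → α} {p : ℕ}
    (hf : Function.Periodic f p) (hp : 0 < p) : (Set.range f).ncard ≤ p := by
  rw [← hf.image_Ioc (by exact_mod_cast hp) 0]
  calc (f '' Set.Ioc 0 (0 + (p : ℤ))).ncard ≤ (Set.Ioc 0 (0 + (p : ℤ))).ncard :=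
        Set.ncard_image_le (Set.finite_Ioc _ _)
    _ = p := by simp [← Finset.coe_Ioc, Set.ncard_coe_finset]

theorem Submodule.span_pair_add_left {R M : Type*} [Ring R] [AddCommGroup M] [Module R M]
    (a b : M) : span R {a + b, b} = span R {a, b} := by
  apply le_antisymm <;> rw [span_le, Set.insert_subset_iff, Set.singleton_subset_iff]
  · exact ⟨add_mem (subset_span (by simp)) (subset_span (by simp)), subset_span (by simp)⟩
  · refine ⟨?_, subset_span (by simp)⟩
    simpa using sub_mem (subset_span (by simp) : a + b ∈ span R {a + b, b})
      (subset_span (by simp) : b ∈ span R {a + b, b})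

theorem Submodule.map_span_pair_of_shear {R M : Type*} [Ring R] [AddCommGroup M] [Module R M]
    {f : M →ₗ[R] M} {a b : M} (ha : f a = a + b) (hb : f b = b) :
    map f (span R {a, b}) = span R {a, b} := by
  rw [map_span, Set.image_pair, ha, hb, span_pair_add_left]

theorem LinearEquiv.periodic_map_zpow {R M : Type*} [Semiring R] [AddCommMonoid M] [Module R M]
    {e : M ≃ₗ[R] M} {S : Submodule R M} {p : ℕ} (h : S.map (e ^ p).toLinearMap = S) :
    Function.Periodic (fun k : ℤ => S.map (e ^ k).toLinearMap) p := by
  intro k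
  simp only [zpow_add, zpow_natCast, LinearEquiv.mul_eq_trans, LinearEquiv.coe_trans,
    Submodule.map_comp, h]

namespace LV

theorem sum_P_eq (p : ℕ) : ∑ j ∈ Finset.range p, LVcl (LVe (LVSym.P (j : ZMod p))) =
    LVcl (LVe LVSym.D1) - LVcl (LVe LVSym.D2) + LVcl (LVe (LVSym.del 0)) := by
  rw [← sub_eq_zero]
  simp only [LVcl, ← Submodule.mkQ_apply, ← map_sum, ← map_sub, ← map_add]
  rw [Submodule.mkQ_apply, Submodule.Quotient.mk_eq_zero, Submodule.mem_span_singleton]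
  exact ⟨1, by rw [one_smul, LVrel]; abel⟩

variable {p : ℕ} {M : LV p ≃ₗ[ℚ] LV p}

theorem pow_apply_D1_sub_D2_add_del (hD1 : M (LVcl (LVe LVSym.D1)) = LVcl (LVe LVSym.D1))
    (hD2 : M (LVcl (LVe LVSym.D2)) = LVcl (LVe LVSym.D2))
    (hdel : ∀ j : ZMod p, M (LVcl (LVe (LVSym.del j))) = LVcl (LVe (LVSym.del (j + 1))))
    (k : ℕ) :
    (M ^ k) (LVcl (LVe LVSym.D1) - LVcl (LVe LVSym.D2) + LVcl (LVe (LVSym.del 0))) =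
      LVcl (LVe LVSym.D1) - LVcl (LVe LVSym.D2) + LVcl (LVe (LVSym.del k)) := by
  induction k with
  | zero => simp
  | succ k ih => rw [pow_succ', LinearEquiv.mul_apply, ih, map_add, map_sub, hD1, hD2, hdel,
      Nat.cast_succ]

theorem pow_apply_gam
    (hgam : M (LVcl (LVe LVSym.gam)) = LVcl (LVe LVSym.gam) + LVcl (LVe (LVSym.P 0)))
    (hP : ∀ j : ℕ, j < p - 1 →
      M (LVcl (LVe (LVSym.P (j : ZMod p)))) = LVcl (LVe (LVSym.P ((j : ZMod p) + 1))))
    {k : ℕ} (hk : k ≤ p) :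
    (M ^ k) (LVcl (LVe LVSym.gam)) =
      LVcl (LVe LVSym.gam) + ∑ j ∈ Finset.range k, LVcl (LVe (LVSym.P (j : ZMod p))) := by
  induction k with
  | zero => simp
  | succ k ih =>
    have hshift : ∀ j ∈ Finset.range k, M (LVcl (LVe (LVSym.P (j : ZMod p)))) =
        LVcl (LVe (LVSym.P ((j + 1 : ℕ) : ZMod p))) := fun j hj => by
      rw [hP j (by grind), Nat.cast_succ]
    rw [pow_succ', LinearEquiv.mul_apply, ih (by omega), map_add, map_sum, hgam,
      Finset.sum_congr rfl hshift, Finset.sum_range_succ' _ k, Nat.cast_zero]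
    abel

end LV

theorem stmt_10_general (p : ℕ) (hp : 1 ≤ p) (M : LV p ≃ₗ[ℚ] LV p)
    (hD1 : M (LVcl (LVe LVSym.D1)) = LVcl (LVe LVSym.D1))
    (hD2 : M (LVcl (LVe LVSym.D2)) = LVcl (LVe LVSym.D2))
    (hdel : ∀ j : ZMod p, M (LVcl (LVe (LVSym.del j))) = LVcl (LVe (LVSym.del (j + 1))))
    (hgam : M (LVcl (LVe LVSym.gam)) = LVcl (LVe LVSym.gam) + LVcl (LVe (LVSym.P 0)))
    (hP : ∀ j : ℕ, j < p - 1 →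
      M (LVcl (LVe (LVSym.P (j : ZMod p)))) = LVcl (LVe (LVSym.P ((j : ZMod p) + 1)))) :
    Submodule.map (M ^ p).toLinearMap
        (Submodule.span ℚ {LVcl (LVe LVSym.gam),
          LVcl (LVe LVSym.D1) - LVcl (LVe LVSym.D2) + LVcl (LVe (LVSym.del 0))}) =
      Submodule.span ℚ {LVcl (LVe LVSym.gam),
        LVcl (LVe LVSym.D1) - LVcl (LVe LVSym.D2) + LVcl (LVe (LVSym.del 0))} ∧
    (Set.range fun k : ℤ => Submodule.map (M ^ k).toLinearMap
        (Submodule.span ℚ {LVcl (LVe LVSym.gam),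
          LVcl (LVe LVSym.D1) - LVcl (LVe LVSym.D2) + LVcl (LVe (LVSym.del 0))})).ncard
      ≤ p := by
  have hH := Submodule.map_span_pair_of_shear (f := (M ^ p).toLinearMap)
    (by rw [LinearEquiv.coe_coe, LV.pow_apply_gam hgam hP le_rfl, LV.sum_P_eq])
    (by rw [LinearEquiv.coe_coe, LV.pow_apply_D1_sub_D2_add_del hD1 hD2 hdel, ZMod.natCast_self])
  exact ⟨hH, (LinearEquiv.periodic_map_zpow hH).ncard_range_le hp⟩

/-- For the monodromy automorphism `M` of the Lotka–Volterra model, the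
two-dimensional subspace `H = span(γ, Δ₁ - Δ₂ + δ₀)` satisfies `Mᵖ(H) = H`, so its orbit
`{Mᵏ(H) : k ∈ ℤ}` has at most `p` elements. -/
theorem stmt_10 (p : ℕ) (hp : 1 ≤ p) (M : LV p ≃ₗ[ℚ] LV p)
    (hD1 : M (LVcl (LVe LVSym.D1)) = LVcl (LVe LVSym.D1))
    (hD2 : M (LVcl (LVe LVSym.D2)) = LVcl (LVe LVSym.D2))
    (hdel : ∀ j : ZMod p, M (LVcl (LVe (LVSym.del j))) = LVcl (LVe (LVSym.del (j + 1))))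
    (hgam : M (LVcl (LVe LVSym.gam)) = LVcl (LVe LVSym.gam) + LVcl (LVe (LVSym.P 0)))
    (hP : ∀ j : ℕ, j < p - 1 →
      M (LVcl (LVe (LVSym.P (j : ZMod p)))) = LVcl (LVe (LVSym.P ((j : ZMod p) + 1))))
    (hPlast : M (LVcl (LVe (LVSym.P ((p - 1 : ℕ) : ZMod p)))) =
      LVcl (LVe (LVSym.P 0)) + LVcl (LVe (LVSym.del 1)) - LVcl (LVe (LVSym.del 0))) :
    Submodule.map (M ^ p).toLinearMap
        (Submodule.span ℚ {LVcl (LVe LVSym.gam),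
          LVcl (LVe LVSym.D1) - LVcl (LVe LVSym.D2) + LVcl (LVe (LVSym.del 0))}) =
      Submodule.span ℚ {LVcl (LVe LVSym.gam),
        LVcl (LVe LVSym.D1) - LVcl (LVe LVSym.D2) + LVcl (LVe (LVSym.del 0))} ∧
    (Set.range fun k : ℤ => Submodule.map (M ^ k).toLinearMap
        (Submodule.span ℚ {LVcl (LVe LVSym.gam),
          LVcl (LVe LVSym.D1) - LVcl (LVe LVSym.D2) + LVcl (LVe (LVSym.del 0))})).ncard
      ≤ p :=
  stmt_10_general p hp M hD1 hD2 hdel hgam hP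
end

section
/- With V, M, H as in the Lotka-Volterra monodromy model, for k = 1, ..., p-1 one has Mᵏ(H) = span(γ + P₀ + ⋯ + P_{k-1}, Δ₁ - Δ₂ + δ_k), and Mᵖ(H) = H. -/
/-!
`M` fixes `Δ₁ - Δ₂` and rotates the `δⱼ`, so `Mᵏ(Δ₁ - Δ₂ + δ₀) = Δ₁ - Δ₂ + δₖ`, while each
application of `M` to `γ` adds the next `Pⱼ`, so `Mᵏ γ = γ + P₀ + ⋯ + P_{k-1}` for `k ≤ p`.
For `k = p` the relation of `V` turns this sum into `h = Δ₁ - Δ₂ + δ₀`, so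
`Mᵖ(H) = span(γ + h, h) = H`.
-/

theorem Submodule.span_pair_add_right {R M : Type*} [Ring R] [AddCommGroup M] [Module R M]
    (x y : M) : Submodule.span R {x + y, y} = Submodule.span R {x, y} := by
  ext
  simp_rw [Submodule.mem_span_pair]
  exact ⟨fun ⟨a, b, h⟩ => ⟨a, a + b, by rw [← h, smul_add, add_smul]; abel⟩,
    fun ⟨a, b, h⟩ => ⟨a, b - a, by rw [← h, smul_add, sub_smul]; abel⟩⟩

theorem Submodule.map_span_pair {R M N : Type*} [Semiring R] [AddCommMonoid M] [Module R M]
    [AddCommMonoid N] [Module R N] (f : M →ₗ[R] N) (x y : M) :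
    Submodule.map f (Submodule.span R {x, y}) = Submodule.span R {f x, f y} := by
  rw [Submodule.map_span, Set.image_pair]

theorem iterate_apply_zero_of_apply_eq_succ {α : Type*} (f : α → α) (y : ℕ → α)
    (hy : ∀ j, f (y j) = y (j + 1)) (k : ℕ) : f^[k] (y 0) = y k := by
  induction k with
  | zero => rfl
  | succ k ih => rw [Function.iterate_succ_apply', ih, hy]

theorem iterate_apply_eq_add_sum_range {E F : Type*} [AddCommMonoid E] [FunLike F E E]
    [AddMonoidHomClass F E E] (f : F) (g : E) (x : ℕ → E) {n : ℕ}
    (hg : f g = g + x 0) (hx : ∀ j, j + 1 < n → f (x j) = x (j + 1)) :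
    ∀ k ≤ n, (⇑f)^[k] g = g + ∑ j ∈ Finset.range k, x j := by
  intro k hk
  induction k with
  | zero => simp
  | succ k ih =>
    have hshift : ∀ j ∈ Finset.range k, f (x j) = x (j + 1) := fun j hj =>
      hx j (by have := Finset.mem_range.mp hj; omega)
    rw [Function.iterate_succ_apply', ih (by omega), map_add, map_sum, hg,
      Finset.sum_congr rfl hshift, Finset.sum_range_succ' x, add_assoc, add_comm (x 0)]

theorem LVcl_sum_P (p : ℕ) :
    ∑ j ∈ Finset.range p, LVcl (LVe (LVSym.P (j : ZMod p))) =
      LVcl (LVe LVSym.D1) - LVcl (LVe LVSym.D2) + LVcl (LVe (LVSym.del 0)) := by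
  have hrel : (Submodule.span ℚ {LVrel p}).mkQ ((∑ j ∈ Finset.range p, LVe (LVSym.P (j : ZMod p)))
      - LVe LVSym.D1 + LVe LVSym.D2 - LVe (LVSym.del 0)) = 0 :=
    (Submodule.Quotient.mk_eq_zero _).mpr (Submodule.mem_span_singleton_self _)
  rw [map_sub, map_add, map_sub, map_sum] at hrel
  rw [← sub_eq_zero, ← hrel]
  unfold LVcl
  abel

theorem stmt_11_general (p : ℕ) (M : LV p ≃ₗ[ℚ] LV p)
    (hD1 : M (LVcl (LVe LVSym.D1)) = LVcl (LVe LVSym.D1))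
    (hD2 : M (LVcl (LVe LVSym.D2)) = LVcl (LVe LVSym.D2))
    (hdel : ∀ j : ZMod p, M (LVcl (LVe (LVSym.del j))) = LVcl (LVe (LVSym.del (j + 1))))
    (hgam : M (LVcl (LVe LVSym.gam)) = LVcl (LVe LVSym.gam) + LVcl (LVe (LVSym.P 0)))
    (hP : ∀ j : ℕ, j < p - 1 →
      M (LVcl (LVe (LVSym.P (j : ZMod p)))) = LVcl (LVe (LVSym.P ((j : ZMod p) + 1)))) :
    (∀ k : ℕ, 1 ≤ k → k ≤ p - 1 →
      Submodule.map (M ^ k).toLinearMap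
          (Submodule.span ℚ {LVcl (LVe LVSym.gam),
            LVcl (LVe LVSym.D1) - LVcl (LVe LVSym.D2) + LVcl (LVe (LVSym.del 0))}) =
        Submodule.span ℚ
          {LVcl (LVe LVSym.gam) + ∑ j ∈ Finset.range k, LVcl (LVe (LVSym.P (j : ZMod p))),
            LVcl (LVe LVSym.D1) - LVcl (LVe LVSym.D2) + LVcl (LVe (LVSym.del (k : ZMod p)))}) ∧
    Submodule.map (M ^ p).toLinearMap
        (Submodule.span ℚ {LVcl (LVe LVSym.gam),
          LVcl (LVe LVSym.D1) - LVcl (LVe LVSym.D2) + LVcl (LVe (LVSym.del 0))}) =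
      Submodule.span ℚ {LVcl (LVe LVSym.gam),
        LVcl (LVe LVSym.D1) - LVcl (LVe LVSym.D2) + LVcl (LVe (LVSym.del 0))} := by
  have hM_h : ∀ k : ℕ, (M ^ k) (LVcl (LVe LVSym.D1) - LVcl (LVe LVSym.D2) +
      LVcl (LVe (LVSym.del 0))) =
      LVcl (LVe LVSym.D1) - LVcl (LVe LVSym.D2) + LVcl (LVe (LVSym.del (k : ZMod p))) := by
    intro k
    rw [LinearEquiv.coe_pow]
    simpa only [Nat.cast_zero] using iterate_apply_zero_of_apply_eq_succ M
      (fun k => LVcl (LVe LVSym.D1) - LVcl (LVe LVSym.D2) + LVcl (LVe (LVSym.del (k : ZMod p))))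
      (fun j => by simp only [map_add, map_sub, hD1, hD2, hdel, Nat.cast_succ]) k
  have hM_gam : ∀ k ≤ p, (M ^ k) (LVcl (LVe LVSym.gam)) =
      LVcl (LVe LVSym.gam) + ∑ j ∈ Finset.range k, LVcl (LVe (LVSym.P (j : ZMod p))) := by
    intro k hk
    rw [LinearEquiv.coe_pow]
    refine iterate_apply_eq_add_sum_range M _ _ (by simpa using hgam) (fun j hj => ?_) k hk
    rw [hP j (by omega), Nat.cast_succ]
  refine ⟨fun k _ hk => ?_, ?_⟩
  · rw [Submodule.map_span_pair, LinearEquiv.coe_coe, hM_gam k (by omega), hM_h k]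
  · rw [Submodule.map_span_pair, LinearEquiv.coe_coe, hM_gam p le_rfl, LVcl_sum_P, hM_h p,
      ZMod.natCast_self]
    exact Submodule.span_pair_add_right _ _

/-- For the monodromy `M` of the Lotka–Volterra model and
`H = span(γ, Δ₁ - Δ₂ + δ₀)`, one has
`Mᵏ(H) = span(γ + P₀ + ⋯ + P_{k-1}, Δ₁ - Δ₂ + δ_k)` for `k = 1, …, p-1`,
and `Mᵖ(H) = H`. -/
theorem stmt_11 (p : ℕ) (hp : 1 ≤ p) (M : LV p ≃ₗ[ℚ] LV p)
    (hD1 : M (LVcl (LVe LVSym.D1)) = LVcl (LVe LVSym.D1))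
    (hD2 : M (LVcl (LVe LVSym.D2)) = LVcl (LVe LVSym.D2))
    (hdel : ∀ j : ZMod p, M (LVcl (LVe (LVSym.del j))) = LVcl (LVe (LVSym.del (j + 1))))
    (hgam : M (LVcl (LVe LVSym.gam)) = LVcl (LVe LVSym.gam) + LVcl (LVe (LVSym.P 0)))
    (hP : ∀ j : ℕ, j < p - 1 →
      M (LVcl (LVe (LVSym.P (j : ZMod p)))) = LVcl (LVe (LVSym.P ((j : ZMod p) + 1))))
    (hPlast : M (LVcl (LVe (LVSym.P ((p - 1 : ℕ) : ZMod p)))) =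
      LVcl (LVe (LVSym.P 0)) + LVcl (LVe (LVSym.del 1)) - LVcl (LVe (LVSym.del 0))) :
    (∀ k : ℕ, 1 ≤ k → k ≤ p - 1 →
      Submodule.map (M ^ k).toLinearMap
          (Submodule.span ℚ {LVcl (LVe LVSym.gam),
            LVcl (LVe LVSym.D1) - LVcl (LVe LVSym.D2) + LVcl (LVe (LVSym.del 0))}) =
        Submodule.span ℚ
          {LVcl (LVe LVSym.gam) + ∑ j ∈ Finset.range k, LVcl (LVe (LVSym.P (j : ZMod p))),
            LVcl (LVe LVSym.D1) - LVcl (LVe LVSym.D2) + LVcl (LVe (LVSym.del (k : ZMod p)))}) ∧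
    Submodule.map (M ^ p).toLinearMap
        (Submodule.span ℚ {LVcl (LVe LVSym.gam),
          LVcl (LVe LVSym.D1) - LVcl (LVe LVSym.D2) + LVcl (LVe (LVSym.del 0))}) =
      Submodule.span ℚ {LVcl (LVe LVSym.gam),
        LVcl (LVe LVSym.D1) - LVcl (LVe LVSym.D2) + LVcl (LVe (LVSym.del 0))} :=
  stmt_11_general p M hD1 hD2 hdel hgam hP
end

section
/- With V, M as in the Lotka-Volterra monodromy model, and the bilinear intersection form on V determined by γ·P_{p-1} = -1, γ·Pⱼ = 0 for j < p-1, γ·δ₀ = -1, γ·δⱼ = 0 for j ≥ 1, γ·Δ₁ = -1, γ·Δ₂ = -1, the generators of Mᵏ(H) for k = 1,...,p-1 satisfy γ·(γ + P₀ + ⋯ + P_{k-1}) = 0 and γ·(Δ₁ - Δ₂ + δ_k) = 0; hence each Mᵏ(H) is invariant under the Picard-Lefschetz transvection M_c(v) = v + (v·γ)γ. -/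
/-! Under `M`, `γ` moves along `γ, γ + P₀, γ + P₀ + P₁, …` and `Δ₁ - Δ₂ + δ₀` along
`Δ₁ - Δ₂ + δ₁, Δ₁ - Δ₂ + δ₂, …`, so `Mᵏ(H)` is spanned by `γ + P₀ + ⋯ + P_{k-1}` and
`Δ₁ - Δ₂ + δ_k`. For `1 ≤ k ≤ p - 1` these avoid `P_{p-1}` and `δ₀`, and the two `-1`'s of
`γ·Δ₁` and `γ·Δ₂` cancel, so both generators are orthogonal to `γ`. Hence `v·γ = 0` on
`Mᵏ(H)` and the transvection fixes it pointwise. -/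

theorem Function.iterate_apply_eq_add_sum {V F : Type*} [AddCommMonoid V] [FunLike F V V]
    [AddMonoidHomClass F V V] {f : F} {a : V} {x : ℕ → V} {n : ℕ}
    (ha : f a = a + x 0) (hx : ∀ j < n, f (x j) = x (j + 1)) :
    ∀ m ≤ n + 1, (⇑f)^[m] a = a + ∑ j ∈ Finset.range m, x j := by
  intro m
  induction m with
  | zero => simp
  | succ m ih =>
    intro hm
    have hshift : ∑ j ∈ Finset.range m, f (x j) = ∑ j ∈ Finset.range m, x (j + 1) :=
      Finset.sum_congr rfl fun j hj => hx j (by simp at hj; omega)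
    rw [Function.iterate_succ_apply', ih (by omega), map_add, map_sum, ha, hshift,
      Finset.sum_range_succ']
    abel

theorem Function.iterate_apply_eq_of_apply_eq_succ {V : Type*} {f : V → V} {y : ℕ → V}
    (hy : ∀ j, f (y j) = y (j + 1)) (m : ℕ) : f^[m] (y 0) = y m := by
  induction m with
  | zero => rfl
  | succ m ih => rw [Function.iterate_succ_apply', ih, hy]

theorem LinearMap.add_smul_mem_span_of_apply_eq_zero {R V : Type*} [CommSemiring R]
    [AddCommMonoid V] [Module R V] {B : V →ₗ[R] V →ₗ[R] R} {S : Set V} {c : V}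
    (hS : ∀ s ∈ S, B s c = 0) {v : V} (hv : v ∈ Submodule.span R S) :
    v + B v c • c ∈ Submodule.span R S := by
  have hvc : v ∈ LinearMap.ker (B.flip c) :=
    Submodule.span_le.mpr (fun s hs => LinearMap.mem_ker.mpr (hS s hs)) hv
  rw [LinearMap.mem_ker, LinearMap.flip_apply] at hvc
  rwa [hvc, zero_smul, add_zero]

theorem stmt_12_general (p : ℕ) (M : LV p ≃ₗ[ℚ] LV p)
    (hD1 : M (LVcl (LVe LVSym.D1)) = LVcl (LVe LVSym.D1))
    (hD2 : M (LVcl (LVe LVSym.D2)) = LVcl (LVe LVSym.D2))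
    (hdel : ∀ j : ZMod p, M (LVcl (LVe (LVSym.del j))) = LVcl (LVe (LVSym.del (j + 1))))
    (hgam : M (LVcl (LVe LVSym.gam)) = LVcl (LVe LVSym.gam) + LVcl (LVe (LVSym.P 0)))
    (hP : ∀ j : ℕ, j < p - 1 →
      M (LVcl (LVe (LVSym.P (j : ZMod p)))) = LVcl (LVe (LVSym.P ((j : ZMod p) + 1))))
    (B : LV p →ₗ[ℚ] LV p →ₗ[ℚ] ℚ)
    (hanti : ∀ u v : LV p, B u v = -B v u)
    (hgg : B (LVcl (LVe LVSym.gam)) (LVcl (LVe LVSym.gam)) = 0)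
    (hgP : ∀ j : ℕ, j < p - 1 →
      B (LVcl (LVe LVSym.gam)) (LVcl (LVe (LVSym.P (j : ZMod p)))) = 0)
    (hgd : ∀ j : ℕ, 1 ≤ j → j ≤ p - 1 →
      B (LVcl (LVe LVSym.gam)) (LVcl (LVe (LVSym.del (j : ZMod p)))) = 0)
    (hgD1 : B (LVcl (LVe LVSym.gam)) (LVcl (LVe LVSym.D1)) = -1)
    (hgD2 : B (LVcl (LVe LVSym.gam)) (LVcl (LVe LVSym.D2)) = -1) :
    ∀ k : ℕ, 1 ≤ k → k ≤ p - 1 →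
      B (LVcl (LVe LVSym.gam))
          (LVcl (LVe LVSym.gam) + ∑ j ∈ Finset.range k, LVcl (LVe (LVSym.P (j : ZMod p)))) = 0 ∧
      B (LVcl (LVe LVSym.gam))
          (LVcl (LVe LVSym.D1) - LVcl (LVe LVSym.D2) + LVcl (LVe (LVSym.del (k : ZMod p)))) = 0 ∧
      ∀ v ∈ Submodule.map (M ^ k).toLinearMap
          (Submodule.span ℚ {LVcl (LVe LVSym.gam),
            LVcl (LVe LVSym.D1) - LVcl (LVe LVSym.D2) + LVcl (LVe (LVSym.del 0))}),
        v + B v (LVcl (LVe LVSym.gam)) • LVcl (LVe LVSym.gam) ∈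
          Submodule.map (M ^ k).toLinearMap
            (Submodule.span ℚ {LVcl (LVe LVSym.gam),
              LVcl (LVe LVSym.D1) - LVcl (LVe LVSym.D2) + LVcl (LVe (LVSym.del 0))}) := by
  intro k hk1 hk2
  set γ := LVcl (LVe (p := p) LVSym.gam)
  set P : ℕ → LV p := fun j => LVcl (LVe (LVSym.P (j : ZMod p)))
  set η : ℕ → LV p := fun j =>
    LVcl (LVe LVSym.D1) - LVcl (LVe LVSym.D2) + LVcl (LVe (LVSym.del (j : ZMod p)))
  have hγ_orth : B γ (γ + ∑ j ∈ Finset.range k, P j) = 0 := by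
    rw [map_add, map_sum, hgg, Finset.sum_eq_zero fun j hj => hgP j (by simp at hj; omega),
      add_zero]
  have hη_orth : B γ (η k) = 0 := by
    simp only [η, map_add, map_sub, hgD1, hgD2, hgd k hk1 hk2]
    ring
  refine ⟨hγ_orth, hη_orth, fun v hv => ?_⟩
  have hMγ : (M ^ k) γ = γ + ∑ j ∈ Finset.range k, P j :=
    (LinearEquiv.pow_apply M k γ).trans <| Function.iterate_apply_eq_add_sum (n := p - 1)
      (by simpa [P] using hgam) (fun j hj => by simpa [P] using hP j hj) k (by omega)
  have hMη : (M ^ k) (η 0) = η k :=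
    (LinearEquiv.pow_apply M k _).trans <| Function.iterate_apply_eq_of_apply_eq_succ
      (fun j => by simp [η, hD1, hD2, hdel]) k
  have hη0 : η 0 = LVcl (LVe LVSym.D1) - LVcl (LVe LVSym.D2) + LVcl (LVe (LVSym.del 0)) := by
    simp [η]
  rw [← hη0, Submodule.map_span, Set.image_pair] at hv ⊢
  refine LinearMap.add_smul_mem_span_of_apply_eq_zero ?_ hv
  simp only [Set.mem_insert_iff, Set.mem_singleton_iff, forall_eq_or_imp, forall_eq]
  exact ⟨by rw [hanti, LinearEquiv.coe_coe, hMγ, hγ_orth, neg_zero],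
    by rw [hanti, LinearEquiv.coe_coe, hMη, hη_orth, neg_zero]⟩

/-- With the intersection form `B` on the Lotka–Volterra model
(`γ·γ = 0`, `γ·P_{p-1} = -1`, `γ·Pⱼ = 0` for `j < p-1`, `γ·δ₀ = -1`, `γ·δⱼ = 0`
for `j ≥ 1`, `γ·Δ₁ = γ·Δ₂ = -1`), the generators of `Mᵏ(H)`, `k = 1, …, p-1`,
pair to zero with `γ`; hence each `Mᵏ(H)` is invariant under the Picard–Lefschetz
transvection `M_c(v) = v + (v·γ) γ`. -/
theorem stmt_12 (p : ℕ) (hp : 2 ≤ p) (M : LV p ≃ₗ[ℚ] LV p)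
    (hD1 : M (LVcl (LVe LVSym.D1)) = LVcl (LVe LVSym.D1))
    (hD2 : M (LVcl (LVe LVSym.D2)) = LVcl (LVe LVSym.D2))
    (hdel : ∀ j : ZMod p, M (LVcl (LVe (LVSym.del j))) = LVcl (LVe (LVSym.del (j + 1))))
    (hgam : M (LVcl (LVe LVSym.gam)) = LVcl (LVe LVSym.gam) + LVcl (LVe (LVSym.P 0)))
    (hP : ∀ j : ℕ, j < p - 1 →
      M (LVcl (LVe (LVSym.P (j : ZMod p)))) = LVcl (LVe (LVSym.P ((j : ZMod p) + 1))))
    (hPlast : M (LVcl (LVe (LVSym.P ((p - 1 : ℕ) : ZMod p)))) =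
      LVcl (LVe (LVSym.P 0)) + LVcl (LVe (LVSym.del 1)) - LVcl (LVe (LVSym.del 0)))
    (B : LV p →ₗ[ℚ] LV p →ₗ[ℚ] ℚ)
    (hanti : ∀ u v : LV p, B u v = -B v u)
    (hgg : B (LVcl (LVe LVSym.gam)) (LVcl (LVe LVSym.gam)) = 0)
    (hgPlast : B (LVcl (LVe LVSym.gam)) (LVcl (LVe (LVSym.P ((p - 1 : ℕ) : ZMod p)))) = -1)
    (hgP : ∀ j : ℕ, j < p - 1 →
      B (LVcl (LVe LVSym.gam)) (LVcl (LVe (LVSym.P (j : ZMod p)))) = 0)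
    (hgd0 : B (LVcl (LVe LVSym.gam)) (LVcl (LVe (LVSym.del 0))) = -1)
    (hgd : ∀ j : ℕ, 1 ≤ j → j ≤ p - 1 →
      B (LVcl (LVe LVSym.gam)) (LVcl (LVe (LVSym.del (j : ZMod p)))) = 0)
    (hgD1 : B (LVcl (LVe LVSym.gam)) (LVcl (LVe LVSym.D1)) = -1)
    (hgD2 : B (LVcl (LVe LVSym.gam)) (LVcl (LVe LVSym.D2)) = -1) :
    ∀ k : ℕ, 1 ≤ k → k ≤ p - 1 →
      B (LVcl (LVe LVSym.gam))
          (LVcl (LVe LVSym.gam) + ∑ j ∈ Finset.range k, LVcl (LVe (LVSym.P (j : ZMod p)))) = 0 ∧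
      B (LVcl (LVe LVSym.gam))
          (LVcl (LVe LVSym.D1) - LVcl (LVe LVSym.D2) + LVcl (LVe (LVSym.del (k : ZMod p)))) = 0 ∧
      ∀ v ∈ Submodule.map (M ^ k).toLinearMap
          (Submodule.span ℚ {LVcl (LVe LVSym.gam),
            LVcl (LVe LVSym.D1) - LVcl (LVe LVSym.D2) + LVcl (LVe (LVSym.del 0))}),
        v + B v (LVcl (LVe LVSym.gam)) • LVcl (LVe LVSym.gam) ∈
          Submodule.map (M ^ k).toLinearMap
            (Submodule.span ℚ {LVcl (LVe LVSym.gam),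
              LVcl (LVe LVSym.D1) - LVcl (LVe LVSym.D2) + LVcl (LVe (LVSym.del 0))}) :=
  stmt_12_general p M hD1 hD2 hdel hgam hP B hanti hgg hgP hgd hgD1 hgD2
end

section
/- Consider the free ℚ-vector space spanned by symbols γ, Δ₁, Δ₂, Q₀,...,Q_{q-1}, P₀,...,P_{p-1} modulo the relations Q₀+⋯+Q_{q-1} = Δ₂-Δ₁ and P₀+⋯+P_{p-1} = Δ₁-Δ₂ (so dim = p+q+1). Let mon₀ be defined by mon₀(Qⱼ) = Q_{j+m mod q}, mon₀(P_k) = P_{k-n mod p}, mon₀(Δⱼ) = Δⱼ, mon₀(γ) = γ + Q₀ + ⋯ + Q_{m-1} + P₀ + ⋯ + P_{-n-1}, where pm + qn = 1, m > 0 > n. Then mon₀ is well-defined and mon₀^{pq}(γ) = γ + Δ₂ - Δ₁. -/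
/-- Symbols generating the homology model in the parabolic case
`F = x^p (y² + x - 1)^q`: `γ, Δ₁, Δ₂, Q₀,…,Q_{q-1}, P₀,…,P_{p-1}`. -/
inductive PSym (p q : ℕ) : Type
  | gam : PSym p q
  | D1 : PSym p q
  | D2 : PSym p q
  | Q : ZMod q → PSym p q
  | P : ZMod p → PSym p q
  deriving DecidableEq

/-- Basis vector of the free ℚ-vector space on the symbols. -/
noncomputable def Pe {p q : ℕ} (s : PSym p q) : PSym p q →₀ ℚ := Finsupp.single s 1

/-- First relation: `Q₀ + ⋯ + Q_{q-1} - Δ₂ + Δ₁`. -/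
noncomputable def Prel₁ (p q : ℕ) : PSym p q →₀ ℚ :=
  (∑ j ∈ Finset.range q, Pe (PSym.Q (j : ZMod q))) - Pe PSym.D2 + Pe PSym.D1

/-- Second relation: `P₀ + ⋯ + P_{p-1} - Δ₁ + Δ₂`. -/
noncomputable def Prel₂ (p q : ℕ) : PSym p q →₀ ℚ :=
  (∑ j ∈ Finset.range p, Pe (PSym.P (j : ZMod p))) - Pe PSym.D1 + Pe PSym.D2

/-- The quotient space of dimension `p + q + 1`. -/
abbrev PV (p q : ℕ) : Type :=
  (PSym p q →₀ ℚ) ⧸ Submodule.span ℚ {Prel₁ p q, Prel₂ p q}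

/-- Class of a vector in the quotient. -/
noncomputable def Pcl {p q : ℕ} (v : PSym p q →₀ ℚ) : PV p q := Submodule.Quotient.mk v

/-! `mon₀` shifts the `Q`'s by `m` and the `P`'s by `-n`, so `mon₀ᴺ γ` is `γ` plus the consecutive
sums `Q₀ + ⋯ + Q_{Nm-1}` and `P₀ + ⋯ + P_{-Nn-1}`, indices read mod `q` and `p`. For `N = pq` these
are `mp` full cycles of `Q`'s and `-nq` full cycles of `P`'s, contributing
`mp (Δ₂ - Δ₁) - nq (Δ₁ - Δ₂) = (pm + qn) (Δ₂ - Δ₁) = Δ₂ - Δ₁`. -/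
open Finset

theorem sum_range_zmod_add {A : Type*} [AddCommMonoid A] (q : ℕ) (g : ZMod q → A) (a : ZMod q) :
    ∑ i ∈ range q, g (i + a) = ∑ i ∈ range q, g i := by
  cases q with
  | zero => simp
  | succ q =>
    simp only [← Fin.sum_univ_eq_sum_range (fun i => g ((i : ZMod (q + 1)) + a)),
      ← Fin.sum_univ_eq_sum_range (fun i => g (i : ZMod (q + 1)))]
    exact Fintype.sum_equiv (Equiv.addRight a) _ _ fun x => by
      -- `ZMod (q + 1)` is `Fin (q + 1)`, whose coercion to `ℕ` is `ZMod.val`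
      change g ((ZMod.val x : ZMod (q + 1)) + a) = g (ZMod.val (x + a) : ZMod (q + 1))
      simp only [ZMod.natCast_zmod_val]

theorem sum_range_mul_zmod {A : Type*} [AddCommMonoid A] (q k : ℕ) (g : ZMod q → A) :
    ∑ i ∈ range (k * q), g i = k • ∑ i ∈ range q, g i := by
  induction k with
  | zero => simp
  | succ k ih => simp [Nat.succ_mul, sum_range_add, ih, succ_nsmul]

section Iterates

variable {R V : Type*} [Semiring R] [AddCommMonoid V] [Module R V]

theorem Module.End.pow_apply_eq_add_sum_of_apply_eq_add {M : Module.End R V} {x y : V}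
    (h : M x = x + y) (N : ℕ) : (M ^ N) x = x + ∑ k ∈ range N, (M ^ k) y := by
  induction N with
  | zero => simp
  | succ N ih => rw [pow_succ, Module.End.mul_apply, h, map_add, ih, sum_range_succ, add_assoc]

theorem Module.End.sum_pow_apply_sum_range_of_apply_eq_shift {M : Module.End R V} {f : ℕ → V}
    {a : ℕ} (hf : ∀ i, M (f i) = f (i + a)) (N : ℕ) :
    ∑ k ∈ range N, (M ^ k) (∑ j ∈ range a, f j) = ∑ i ∈ range (N * a), f i := by
  have hpow : ∀ k i, (M ^ k) (f i) = f (k * a + i) := by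
    intro k
    induction k with
    | zero => simp
    | succ k ih => intro i; rw [pow_succ', Module.End.mul_apply, ih, hf]; ring_nf
  induction N with
  | zero => simp
  | succ N ih =>
    rw [sum_range_succ, ih, map_sum, Nat.succ_mul, sum_range_add]
    simp only [hpow]

end Iterates

noncomputable def mon₀Gen (p q : ℕ) (m n : ℤ) : PSym p q → (PSym p q →₀ ℚ)
  | PSym.gam => Pe PSym.gam + ∑ j ∈ range m.toNat, Pe (PSym.Q (j : ZMod q))
      + ∑ j ∈ range (-n).toNat, Pe (PSym.P (j : ZMod p))
  | PSym.D1 => Pe PSym.D1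
  | PSym.D2 => Pe PSym.D2
  | PSym.Q j => Pe (PSym.Q (j + (m : ZMod q)))
  | PSym.P k => Pe (PSym.P (k - (n : ZMod p)))

noncomputable def mon₀Free (p q : ℕ) (m n : ℤ) : (PSym p q →₀ ℚ) →ₗ[ℚ] (PSym p q →₀ ℚ) :=
  Finsupp.linearCombination ℚ (mon₀Gen p q m n)

section Monodromy

variable {p q : ℕ} {m n : ℤ}

theorem mon₀Free_Pe (s : PSym p q) : mon₀Free p q m n (Pe s) = mon₀Gen p q m n s := by
  simp [mon₀Free, Pe]

theorem mon₀Free_Prel₁ : mon₀Free p q m n (Prel₁ p q) = Prel₁ p q := by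
  simp only [Prel₁, map_add, map_sub, map_sum, mon₀Free_Pe, mon₀Gen]
  rw [sum_range_zmod_add q (fun c => Pe (PSym.Q c))]

theorem mon₀Free_Prel₂ : mon₀Free p q m n (Prel₂ p q) = Prel₂ p q := by
  simp only [Prel₂, map_add, map_sub, map_sum, mon₀Free_Pe, mon₀Gen, sub_eq_add_neg (_ : ZMod p)]
  rw [sum_range_zmod_add p (fun c => Pe (PSym.P c))]

theorem span_rel_le_comap_mon₀Free :
    Submodule.span ℚ {Prel₁ p q, Prel₂ p q} ≤
      (Submodule.span ℚ {Prel₁ p q, Prel₂ p q}).comap (mon₀Free p q m n) := by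
  refine Submodule.span_le.2 (Set.pair_subset ?_ ?_) <;>
    simp only [SetLike.mem_coe, Submodule.mem_comap, mon₀Free_Prel₁, mon₀Free_Prel₂] <;>
    exact Submodule.subset_span (by simp)

variable (p q m n) in
noncomputable def mon₀ : PV p q →ₗ[ℚ] PV p q :=
  Submodule.mapQ _ _ (mon₀Free p q m n) span_rel_le_comap_mon₀Free

theorem Pcl_add (v w : PSym p q →₀ ℚ) : Pcl (v + w) = Pcl v + Pcl w := rfl

theorem Pcl_sub (v w : PSym p q →₀ ℚ) : Pcl (v - w) = Pcl v - Pcl w := rfl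

theorem Pcl_sum {ι : Type*} (s : Finset ι) (f : ι → PSym p q →₀ ℚ) :
    Pcl (∑ i ∈ s, f i) = ∑ i ∈ s, Pcl (f i) :=
  map_sum (Submodule.mkQ _) f s

theorem mon₀_Pcl_Pe (s : PSym p q) : mon₀ p q m n (Pcl (Pe s)) = Pcl (mon₀Gen p q m n s) := by
  rw [mon₀, Pcl, Submodule.mapQ_apply, mon₀Free_Pe]; rfl

theorem mon₀_Pcl_Q (j : ZMod q) :
    mon₀ p q m n (Pcl (Pe (PSym.Q j))) = Pcl (Pe (PSym.Q (j + (m : ZMod q)))) :=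
  mon₀_Pcl_Pe _

theorem mon₀_Pcl_P (k : ZMod p) :
    mon₀ p q m n (Pcl (Pe (PSym.P k))) = Pcl (Pe (PSym.P (k - (n : ZMod p)))) :=
  mon₀_Pcl_Pe _

theorem mon₀_Pcl_gam : mon₀ p q m n (Pcl (Pe PSym.gam)) = Pcl (Pe PSym.gam)
    + (∑ j ∈ range m.toNat, Pcl (Pe (PSym.Q (j : ZMod q)))
      + ∑ j ∈ range (-n).toNat, Pcl (Pe (PSym.P (j : ZMod p)))) := by
  rw [mon₀_Pcl_Pe, mon₀Gen, Pcl_add, Pcl_add, Pcl_sum, Pcl_sum, add_assoc]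

theorem sum_range_Pcl_Q :
    ∑ j ∈ range q, Pcl (Pe (PSym.Q (j : ZMod q)))
      = Pcl (Pe PSym.D2) - (Pcl (Pe PSym.D1) : PV p q) := by
  rw [← Pcl_sum, ← Pcl_sub]
  have hrel : Prel₁ p q ∈ Submodule.span ℚ {Prel₁ p q, Prel₂ p q} :=
    Submodule.subset_span (by simp)
  refine (Submodule.Quotient.eq _).2 ?_
  convert hrel using 1
  rw [Prel₁]; abel

theorem sum_range_Pcl_P :
    ∑ j ∈ range p, Pcl (Pe (PSym.P (j : ZMod p)))
      = Pcl (Pe PSym.D1) - (Pcl (Pe PSym.D2) : PV p q) := by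
  rw [← Pcl_sum, ← Pcl_sub]
  have hrel : Prel₂ p q ∈ Submodule.span ℚ {Prel₁ p q, Prel₂ p q} :=
    Submodule.subset_span (by simp)
  refine (Submodule.Quotient.eq _).2 ?_
  convert hrel using 1
  rw [Prel₂]; abel

end Monodromy

theorem stmt_13_general (p q : ℕ)
    (m n : ℤ) (hmn : (p : ℤ) * m + (q : ℤ) * n = 1)
    (hm0 : 0 < m) (hn0 : n ≤ 0) :
    ∃ M : PV p q →ₗ[ℚ] PV p q,
      (∀ j : ZMod q, M (Pcl (Pe (PSym.Q j))) = Pcl (Pe (PSym.Q (j + (m : ZMod q))))) ∧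
      (∀ k : ZMod p, M (Pcl (Pe (PSym.P k))) = Pcl (Pe (PSym.P (k - (n : ZMod p))))) ∧
      M (Pcl (Pe PSym.D1)) = Pcl (Pe PSym.D1) ∧
      M (Pcl (Pe PSym.D2)) = Pcl (Pe PSym.D2) ∧
      M (Pcl (Pe PSym.gam)) = Pcl (Pe PSym.gam)
          + ∑ j ∈ Finset.range m.toNat, Pcl (Pe (PSym.Q (j : ZMod q)))
          + ∑ j ∈ Finset.range (-n).toNat, Pcl (Pe (PSym.P (j : ZMod p))) ∧
      (M ^ (p * q)) (Pcl (Pe PSym.gam)) =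
        Pcl (Pe PSym.gam) + Pcl (Pe PSym.D2) - Pcl (Pe PSym.D1) := by
  refine ⟨mon₀ p q m n, mon₀_Pcl_Q, mon₀_Pcl_P, mon₀_Pcl_Pe _, mon₀_Pcl_Pe _,
    mon₀_Pcl_gam.trans (add_assoc _ _ _).symm, ?_⟩
  obtain ⟨a, rfl⟩ := Int.eq_ofNat_of_zero_le hm0.le
  obtain ⟨b, hb⟩ := Int.eq_ofNat_of_zero_le (neg_nonneg.2 hn0)
  obtain rfl : n = -b := by omega
  have key : a * p = b * q + 1 := by zify; linarith
  have hQ (i : ℕ) : mon₀ p q a (-b) (Pcl (Pe (PSym.Q (i : ZMod q))))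
      = Pcl (Pe (PSym.Q ((i + a : ℕ) : ZMod q))) := by
    rw [mon₀_Pcl_Q]; push_cast; rfl
  have hP (i : ℕ) : mon₀ p q a (-b) (Pcl (Pe (PSym.P (i : ZMod p))))
      = Pcl (Pe (PSym.P ((i + b : ℕ) : ZMod p))) := by
    rw [mon₀_Pcl_P]; push_cast; rw [sub_neg_eq_add]
  rw [Module.End.pow_apply_eq_add_sum_of_apply_eq_add mon₀_Pcl_gam]
  simp only [Int.toNat_natCast, neg_neg, map_add, sum_add_distrib]
  rw [Module.End.sum_pow_apply_sum_range_of_apply_eq_shift hQ,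
    Module.End.sum_pow_apply_sum_range_of_apply_eq_shift hP,
    show p * q * a = a * p * q by ring, show p * q * b = b * q * p by ring,
    sum_range_mul_zmod q _ fun j => Pcl (Pe (PSym.Q j)),
    sum_range_mul_zmod p _ fun j => Pcl (Pe (PSym.P j)), sum_range_Pcl_Q, sum_range_Pcl_P, key,
    succ_nsmul, ← neg_sub (Pcl (Pe PSym.D2)), smul_neg]
  abel

/-- The monodromy `mon₀` around `t = 0` (given on generators by
`Qⱼ ↦ Q_{j+m}`, `P_k ↦ P_{k-n}`, `Δⱼ ↦ Δⱼ`,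
`γ ↦ γ + Q₀ + ⋯ + Q_{m-1} + P₀ + ⋯ + P_{-n-1}`, where `pm + qn = 1`, `m > 0 ≥ n`)
is well defined on the quotient, and `mon₀^{pq} γ = γ + Δ₂ - Δ₁`. -/
theorem stmt_13 (p q : ℕ) (hp : 1 < p) (hq : 1 < q) (hpq : Nat.Coprime p q)
    (m n : ℤ) (hmn : (p : ℤ) * m + (q : ℤ) * n = 1)
    (hm0 : 0 < m) (hmq : m < (q : ℤ)) (hnp : -(p : ℤ) < n) (hn0 : n ≤ 0) :
    ∃ M : PV p q →ₗ[ℚ] PV p q,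
      (∀ j : ZMod q, M (Pcl (Pe (PSym.Q j))) = Pcl (Pe (PSym.Q (j + (m : ZMod q))))) ∧
      (∀ k : ZMod p, M (Pcl (Pe (PSym.P k))) = Pcl (Pe (PSym.P (k - (n : ZMod p))))) ∧
      M (Pcl (Pe PSym.D1)) = Pcl (Pe PSym.D1) ∧
      M (Pcl (Pe PSym.D2)) = Pcl (Pe PSym.D2) ∧
      M (Pcl (Pe PSym.gam)) = Pcl (Pe PSym.gam)
          + ∑ j ∈ Finset.range m.toNat, Pcl (Pe (PSym.Q (j : ZMod q)))
          + ∑ j ∈ Finset.range (-n).toNat, Pcl (Pe (PSym.P (j : ZMod p))) ∧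
      (M ^ (p * q)) (Pcl (Pe PSym.gam)) =
        Pcl (Pe PSym.gam) + Pcl (Pe PSym.D2) - Pcl (Pe PSym.D1) :=
  stmt_13_general p q m n hmn hm0 hn0
end

section
/- Let S be a set of n functions y₀, y₁, ..., y_{d-1} in a differential field E that are linearly independent over the field of constants C. Then the Wronskian determinant W(y₀, ..., y_{d-1}) is nonzero, and the map y ↦ W(y, y₀, ..., y_{d-1}) / W(y₀, ..., y_{d-1}) defines a monic linear differential operator of order d that annihilates exactly the C-span of y₀, ..., y_{d-1}. -/
/-!
Suppose the Wronskian of `y₀, …, yₙ₋₁` vanishes; by induction on `n` we may assume that of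
`y₀, …, yₙ₋₂` does not. A kernel vector of the Wronskian matrix then writes `w = yₙ₋₁` as
`∑ cⱼ yⱼ` simultaneously in all derivatives of order `≤ n - 1`, with the same coefficients.
Differentiating the `i`-th identity and subtracting the `(i+1)`-st leaves
`∑ d(cⱼ) yⱼ⁽ⁱ⁾ = 0` for `i < n - 1`, so the nonzero smaller Wronskian forces `d(cⱼ) = 0`.
Conversely a relation with constant coefficients passes to all derivatives and gives a kernel
vector. Expanding `W(y₀, …, yₙ₋₁, z)` along its last column exhibits it as
`W(y₀, …, yₙ₋₁) z⁽ⁿ⁾` plus lower derivatives of `z`, and the same argument identifies its zeros.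
-/

open Matrix

namespace Derivation

variable {R : Type*} [CommRing R] {n : ℕ}

section CommRing

variable {A : Type*} [CommRing A] [Algebra R A] (d : Derivation R A A)

def wronskianMatrix (y : Fin n → A) : Matrix (Fin n) (Fin n) A :=
  Matrix.of fun i j => (⇑d)^[i] (y j)

def wronskian (y : Fin n → A) : A :=
  (d.wronskianMatrix y).det

@[simp]
theorem wronskianMatrix_mulVec (y c : Fin n → A) (i : Fin n) :
    (d.wronskianMatrix y *ᵥ c) i = ∑ j, (⇑d)^[i] (y j) * c j :=
  rfl

theorem iterate_sum_mul_of_map_eq_zero {ι : Type*} [Fintype ι] {c : ι → A}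
    (hc : ∀ i, d (c i) = 0) (y : ι → A) (k : ℕ) :
    (⇑d)^[k] (∑ i, c i * y i) = ∑ i, c i * (⇑d)^[k] (y i) := by
  induction k with
  | zero => rfl
  | succ k ih =>
    simp [Function.iterate_succ_apply', ih, map_sum, d.leibniz, hc]

theorem exists_wronskian_snoc_eq (y : Fin n → A) :
    ∃ b : Fin n → A, ∀ z, d.wronskian (Fin.snoc y z) =
      d.wronskian y * (⇑d)^[n] z + ∑ i, b i * (⇑d)^[i] z := by
  let minor (i : Fin (n + 1)) : A := (Matrix.of fun p q : Fin n => (⇑d)^[i.succAbove p] (y q)).det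
  refine ⟨fun i => (-1) ^ (i + n : ℕ) * minor i.castSucc, fun z => ?_⟩
  have hsub (i : Fin (n + 1)) : (d.wronskianMatrix (Fin.snoc y z)).submatrix i.succAbove
      (Fin.last n).succAbove = Matrix.of fun p q => (⇑d)^[i.succAbove p] (y q) := by
    ext p q
    simp [wronskianMatrix, Fin.succAbove_last]
  have hlast : minor (Fin.last n) = d.wronskian y := by
    simp only [minor, Fin.succAbove_last, Fin.val_castSucc]
    rfl
  rw [wronskian, det_succ_column _ (Fin.last n), Fin.sum_univ_castSucc]
  simp only [hsub]
  change ∑ i : Fin n, _ * _ * minor i.castSucc + _ * _ * minor (Fin.last n) = _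
  simp only [hlast, wronskianMatrix, of_apply, Fin.snoc_last, Fin.val_last, Fin.val_castSucc]
  rw [Even.neg_one_pow ⟨n, rfl⟩, one_mul, add_comm, mul_comm ((⇑d)^[n] z)]
  simp only [mul_right_comm _ ((⇑d)^[_] z)]

theorem wronskian_eq_zero_of_sum_eq_zero [IsDomain A] {y c : Fin n → A} (hc0 : c ≠ 0)
    (hc : ∀ i, d (c i) = 0) (hsum : ∑ i, c i * y i = 0) : d.wronskian y = 0 := by
  refine Matrix.exists_mulVec_eq_zero_iff.mp ⟨c, hc0, funext fun i => ?_⟩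
  simp_rw [wronskianMatrix_mulVec, mul_comm _ (c _), ← d.iterate_sum_mul_of_map_eq_zero hc, hsum]
  exact Function.iterate_fixed (map_zero d) i

end CommRing

section Field

variable {K : Type*} [Field K] [Algebra R K] (d : Derivation R K K)

theorem map_eq_zero_of_iterate_eq_sum {y c : Fin n → K} {w : K} (hW : d.wronskian y ≠ 0)
    (h : ∀ i : Fin (n + 1), (⇑d)^[i] w = ∑ j, c j * (⇑d)^[i] (y j)) (j : Fin n) :
    d (c j) = 0 := by
  suffices d.wronskianMatrix y *ᵥ (fun j => d (c j)) = 0 from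
    congrFun (eq_zero_of_mulVec_eq_zero hW this) j
  ext i
  have hdiff := congrArg d (h i.castSucc)
  have hnext := h i.succ
  simp only [Fin.val_castSucc, Fin.val_succ, Function.iterate_succ_apply', map_sum,
    d.leibniz, smul_eq_mul, Finset.sum_add_distrib] at hdiff hnext
  simp only [wronskianMatrix_mulVec, Pi.zero_apply]
  linear_combination hnext - hdiff

theorem exists_iterate_eq_sum_of_wronskian_snoc_eq_zero {y : Fin n → K} {w : K}
    (hW : d.wronskian y ≠ 0) (h : d.wronskian (Fin.snoc y w) = 0) :
    ∃ c : Fin n → K, ∀ i : Fin (n + 1), (⇑d)^[i] w = ∑ j, c j * (⇑d)^[i] (y j) := by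
  obtain ⟨v, hv0, hv⟩ := Matrix.exists_mulVec_eq_zero_iff.mpr h
  have hrow (i : Fin (n + 1)) :
      ∑ j : Fin n, (⇑d)^[i] (y j) * v j.castSucc + (⇑d)^[i] w * v (Fin.last n) = 0 := by
    simpa [Fin.sum_univ_castSucc] using congrFun hv i
  have hlast : v (Fin.last n) ≠ 0 := by
    intro h0
    have hinit : d.wronskianMatrix y *ᵥ (fun j => v j.castSucc) = 0 := by
      ext i
      simpa [h0] using hrow i.castSucc
    apply hv0
    ext j
    induction j using Fin.lastCases with
    | last => exact h0
    | cast j => exact congrFun (eq_zero_of_mulVec_eq_zero hW hinit) j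
  refine ⟨fun j => -v j.castSucc / v (Fin.last n), fun i => ?_⟩
  simp_rw [div_mul_eq_mul_div, ← Finset.sum_div, neg_mul, Finset.sum_neg_distrib,
    mul_comm (v _), eq_div_iff hlast]
  linear_combination hrow i

theorem wronskian_snoc_eq_zero_iff {y : Fin n → K} (hW : d.wronskian y ≠ 0) (z : K) :
    d.wronskian (Fin.snoc y z) = 0 ↔ ∃ c : Fin n → K, (∀ i, d (c i) = 0) ∧ z = ∑ i, c i * y i := by
  constructor
  · intro h
    obtain ⟨c, hc⟩ := d.exists_iterate_eq_sum_of_wronskian_snoc_eq_zero hW h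
    exact ⟨c, d.map_eq_zero_of_iterate_eq_sum hW hc, hc 0⟩
  · rintro ⟨c, hc, rfl⟩
    refine d.wronskian_eq_zero_of_sum_eq_zero (c := Fin.snoc c (-1)) ?_ ?_ ?_
    · exact fun h => by simpa using congrFun h (Fin.last n)
    · simp [Fin.forall_fin_succ', hc]
    · simp [Fin.sum_univ_castSucc]

theorem exists_sum_eq_zero_of_wronskian_eq_zero {y : Fin n → K} (h : d.wronskian y = 0) :
    ∃ c : Fin n → K, c ≠ 0 ∧ (∀ i, d (c i) = 0) ∧ ∑ i, c i * y i = 0 := by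
  induction n with
  | zero => simp [wronskian] at h
  | succ n ih =>
    rw [← Fin.snoc_init_self y] at h ⊢
    by_cases hW : d.wronskian (Fin.init y) = 0
    · obtain ⟨c, hc0, hc, hsum⟩ := ih hW
      refine ⟨Fin.snoc c 0, fun h0 => hc0 ?_, ?_, ?_⟩
      · exact funext fun j => by simpa using congrFun h0 j.castSucc
      · simp [Fin.forall_fin_succ', hc]
      · simpa [Fin.sum_univ_castSucc, Fin.init] using hsum
    · obtain ⟨c, hc, hlast⟩ := (d.wronskian_snoc_eq_zero_iff hW _).mp h
      refine ⟨Fin.snoc c (-1), fun h0 => by simpa using congrFun h0 (Fin.last n), ?_, ?_⟩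
      · simp [Fin.forall_fin_succ', hc]
      · simp [Fin.sum_univ_castSucc, hlast]

end Field

end Derivation

/-- In a differential field `E` with derivation `D`, if `y₀, …, y_{n-1}` are
linearly independent over the constants, then their Wronskian is nonzero and
`z ↦ W(y₀,…,y_{n-1},z) / W(y₀,…,y_{n-1})` is a monic linear differential operator of order
`n` whose kernel is exactly the span of the `y i` over the constants. -/
theorem stmt_16 {E : Type*} [Field E] [CharZero E] (D : E →ₗ[ℚ] E)
    (hLeibniz : ∀ a b : E, D (a * b) = a * D b + D a * b)
    (n : ℕ) (y : Fin n → E)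
    (hind : ∀ c : Fin n → E, (∀ i, D (c i) = 0) → ∑ i, c i * y i = 0 → ∀ i, c i = 0) :
    Matrix.det (Matrix.of fun i j : Fin n => (⇑D)^[(i : ℕ)] (y j)) ≠ 0 ∧
    ∃ a : Fin n → E,
      (∀ z : E,
        Matrix.det (Matrix.of fun i j : Fin (n + 1) => (⇑D)^[(i : ℕ)] ((Fin.snoc y z : Fin (n + 1) → E) j)) /
            Matrix.det (Matrix.of fun i j : Fin n => (⇑D)^[(i : ℕ)] (y j)) =
          (⇑D)^[n] z + ∑ i : Fin n, a i * (⇑D)^[(i : ℕ)] z) ∧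
      (∀ z : E,
        (Matrix.det (Matrix.of fun i j : Fin (n + 1) => (⇑D)^[(i : ℕ)] ((Fin.snoc y z : Fin (n + 1) → E) j)) /
            Matrix.det (Matrix.of fun i j : Fin n => (⇑D)^[(i : ℕ)] (y j)) = 0 ↔
          ∃ c : Fin n → E, (∀ i, D (c i) = 0) ∧ z = ∑ i, c i * y i)) := by
  let d : Derivation ℚ E E :=
    Derivation.mk' D fun a b => by rw [hLeibniz, smul_eq_mul, smul_eq_mul, mul_comm (D a)]
  have hW : d.wronskian y ≠ 0 := fun h => by
    obtain ⟨c, hc0, hc, hsum⟩ := d.exists_sum_eq_zero_of_wronskian_eq_zero h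
    exact hc0 (funext (hind c hc hsum))
  obtain ⟨b, hb⟩ := d.exists_wronskian_snoc_eq y
  refine ⟨hW, fun i => b i / d.wronskian y, fun z => ?_, fun z => ?_⟩
  · change d.wronskian (Fin.snoc y z) / d.wronskian y = _
    rw [hb, add_div, mul_div_cancel_left₀ _ hW, Finset.sum_div]
    simp only [div_mul_eq_mul_div]
    rfl
  · exact (div_eq_zero_iff.trans (or_iff_left hW)).trans (d.wronskian_snoc_eq_zero_iff hW z)
end
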